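/- arXiv:1605.08973 — 2 statements merged into one kernel-verified Lean document; each statement's English description precedes it below -/
import Mathlib

section
/- Let 0 < σ < 1, 3 < α ≤ 4, and let f : (0,1] × [0,∞) → [0,∞) be continuous with (t,y) ↦ t^σ f(t,y) extending continuously to [0,1] × [0,∞). Let N = max_{t∈[0,1]} ∫₀¹ G(t,s) s^(−σ) ds, and suppose there exist 0 < λ ≤ 1/N and τ > 0 such that t^σ |f(t,x) − f(t,y)| ≤ λ|x−y|/(1 + τ√|x−y|)² for all x, y ≥ 0 and t ∈ [0,1]. Then the operator T defined on P = {u ∈ C[0,1] : u ≥ 0} by (Tu)(t) = ∫₀¹ G(t,s) f(s,u(s)) ds maps P into P and has a unique fixed point u ∈ P; i.e., the integral equation u(t) = ∫₀¹ G(t,s) f(s,u(s)) ds has a unique nonnegative continuous solution on [0,1]. -/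
/-!
Both halves rest on two facts about the kernel: `G ≥ 0`, which for `s ≤ t` reduces (with
`x = t - s`, `y = t (1 - s)`, `β = α - 2`) to Bernoulli's inequality for `x ↦ x ^ β`, and the
continuity of `G` on `[0,1]²`. Since `|f(s, u(s))| ≤ M s^(-σ)` with `σ < 1`, dominated convergence
makes `Tu` continuous, so `T` maps the closed cone `P` of `C[0,1]` into itself.

The Lipschitz condition and `λ N ≤ 1` give `d(Tu, Tv) ≤ ψ(d(u, v))` with
`ψ(r) = r / (1 + τ √r)²`. Along an orbit, `e_n = √(d(uₙ, uₙ₊₁))` satisfies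
`e_{n+1} ≤ e_n / (1 + τ e_n)`, i.e. `1 / e_n` grows at least linearly; hence the consecutive
distances are `O(1/n²)`, summable, and the orbit converges to a fixed point, unique because
`ψ(r) < r` for `r > 0`.
-/

open Real

noncomputable def greenG (α t s : ℝ) : ℝ :=
  if s ≤ t then
    ((t - s) ^ (α - 1) + (1 - s) ^ (α - 2) * t ^ (α - 2) * ((s - t) + (α - 2) * (1 - t) * s)) / Real.Gamma α
  else
    (1 - s) ^ (α - 2) * t ^ (α - 2) * ((s - t) + (α - 2) * (1 - t) * s) / Real.Gamma α

noncomputable def uext (u : C(Set.Icc (0:ℝ) 1, ℝ)) (s : ℝ) : ℝ :=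
  if h : s ∈ Set.Icc (0:ℝ) 1 then u ⟨s, h⟩ else 0

open Set Filter Function MeasureTheory intervalIntegral

section SqrtGauge

variable {τ : ℝ}

lemma div_one_add_mul_sqrt_sq_le_self (hτ : 0 ≤ τ) {r : ℝ} (hr : 0 ≤ r) :
    r / (1 + τ * √r) ^ 2 ≤ r :=
  div_le_self hr (one_le_pow₀ (le_add_of_nonneg_right (by positivity)))

lemma div_one_add_mul_sqrt_sq_lt_self (hτ : 0 < τ) {r : ℝ} (hr : 0 < r) :
    r / (1 + τ * √r) ^ 2 < r :=
  div_lt_self hr (one_lt_pow₀ (lt_add_of_pos_right _ (by positivity)) two_ne_zero)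

lemma sqrt_div_one_add_mul_sqrt_sq (hτ : 0 ≤ τ) (r : ℝ) :
    √(r / (1 + τ * √r) ^ 2) = √r / (1 + τ * √r) := by
  rw [sqrt_div' _ (by positivity), sqrt_sq (by positivity)]

lemma monotoneOn_div_one_add_mul_sqrt_sq (hτ : 0 ≤ τ) :
    MonotoneOn (fun r : ℝ => r / (1 + τ * √r) ^ 2) (Ici 0) := by
  intro a ha b hb hab
  have hsq : ∀ r : ℝ, 0 ≤ r → r / (1 + τ * √r) ^ 2 = (√r / (1 + τ * √r)) ^ 2 := fun r hr => by
    rw [div_pow, sq_sqrt hr]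
  simp only [hsq a ha, hsq b hb]
  have hab' : √a ≤ √b := sqrt_le_sqrt hab
  refine pow_le_pow_left₀ (by positivity) ?_ 2
  rw [div_le_div_iff₀ (by positivity) (by positivity)]
  nlinarith

lemma nat_mul_mul_sqrt_le_one (hτ : 0 ≤ τ) {d : ℕ → ℝ}
    (hstep : ∀ n, d (n + 1) ≤ d n / (1 + τ * √(d n)) ^ 2) (n : ℕ) : n * τ * √(d n) ≤ 1 := by
  induction n with
  | zero => simp
  | succ n ih =>
    set e := √(d n)
    have he : 0 ≤ e := sqrt_nonneg _
    have hstep' : √(d (n + 1)) ≤ e / (1 + τ * e) :=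
      (sqrt_le_sqrt (hstep n)).trans (sqrt_div_one_add_mul_sqrt_sq hτ _).le
    calc ((n + 1 : ℕ) : ℝ) * τ * √(d (n + 1)) ≤ (n + 1) * τ * (e / (1 + τ * e)) := by
          push_cast; gcongr
      _ ≤ 1 := by
          rw [mul_div_assoc', div_le_one (by positivity)]
          linarith

lemma summable_of_le_div_one_add_mul_sqrt_sq (hτ : 0 < τ) {d : ℕ → ℝ} (hd : ∀ n, 0 ≤ d n)
    (hstep : ∀ n, d (n + 1) ≤ d n / (1 + τ * √(d n)) ^ 2) : Summable d := by
  refine .of_norm_bounded_eventually_nat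
    ((summable_nat_pow_inv.2 one_lt_two).mul_left (τ ^ 2)⁻¹) ?_
  filter_upwards [eventually_ge_atTop 1] with n hn
  have hn' : (0 : ℝ) < n := by exact_mod_cast hn
  have h := nat_mul_mul_sqrt_le_one hτ.le hstep n
  rw [Real.norm_of_nonneg (hd n), ← mul_inv, ← one_div, le_div_iff₀ (by positivity)]
  calc d n * (τ ^ 2 * n ^ 2) = (n * τ * √(d n)) ^ 2 := by
        rw [mul_pow, sq_sqrt (hd n)]; ring
    _ ≤ 1 := pow_le_one₀ (by positivity) h

/-- A Boyd–Wong type fixed point theorem for the gauge `r ↦ r / (1 + τ √r)²`. -/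
theorem exists_unique_isFixedPt_of_dist_le {X : Type*} [MetricSpace X] [CompleteSpace X]
    [Nonempty X] (hτ : 0 < τ) {T : X → X}
    (hT : ∀ x y, dist (T x) (T y) ≤ dist x y / (1 + τ * √(dist x y)) ^ 2) :
    ∃! x, IsFixedPt T x := by
  obtain ⟨x₀⟩ := ‹Nonempty X›
  have hLip : LipschitzWith 1 T := .of_dist_le_mul fun x y => by
    simpa using (hT x y).trans (div_one_add_mul_sqrt_sq_le_self hτ.le dist_nonneg)
  have hsum : Summable fun n => dist (T^[n] x₀) (T^[n + 1] x₀) :=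
    summable_of_le_div_one_add_mul_sqrt_sq hτ (fun _ => dist_nonneg) fun n => by
      simpa only [iterate_succ_apply'] using hT _ _
  obtain ⟨x, hx⟩ := cauchySeq_tendsto_of_complete (cauchySeq_of_summable_dist hsum)
  have hfix : IsFixedPt T x := isFixedPt_of_tendsto_iterate hx hLip.continuous.continuousAt
  refine ⟨x, hfix, fun y hy => ?_⟩
  by_contra hyx
  have hyx' := hT y x
  rw [hy.eq, hfix.eq] at hyx'
  exact (div_one_add_mul_sqrt_sq_lt_self hτ (dist_pos.2 hyx)).not_ge hyx'

end SqrtGauge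

section KernelIntegral

lemma intervalIntegrable_of_abs_le_mul_rpow_neg {σ c : ℝ} (hσ : σ < 1) {g : ℝ → ℝ}
    (hg : AEStronglyMeasurable g (volume.restrict (Ioc 0 1)))
    (hb : ∀ s ∈ Ioc (0 : ℝ) 1, |g s| ≤ c * s ^ (-σ)) : IntervalIntegrable g volume 0 1 := by
  refine ((intervalIntegrable_rpow' (r := -σ) (by linarith)).const_mul c).mono_fun' ?_ ?_
  · rwa [uIoc_of_le zero_le_one]
  · rw [uIoc_of_le zero_le_one]
    exact (ae_restrict_mem measurableSet_Ioc).mono fun s hs => hb s hs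

lemma continuous_intervalIntegral_mul {k : ℝ → ℝ → ℝ} (hk : Continuous (uncurry k))
    {g : ℝ → ℝ} {a b : ℝ} (hg : IntervalIntegrable g volume a b) :
    Continuous fun t => ∫ s in a..b, k t s * g s := by
  refine continuous_iff_continuousAt.2 fun t₀ => ?_
  obtain ⟨K, hK⟩ :=
    ((isCompact_closedBall t₀ 1).prod isCompact_uIcc).exists_bound_of_continuousOn hk.continuousOn
  have hk_left (t : ℝ) : Continuous (k t) := hk.comp (continuous_const.prodMk continuous_id)
  refine continuousAt_of_dominated_interval
    (Eventually.of_forall fun t => ((hk_left t).aestronglyMeasurable).mul hg.def'.1)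
    ?_ (hg.norm.const_mul K) (ae_of_all _ fun s _ => ?_)
  · filter_upwards [Metric.closedBall_mem_nhds t₀ one_pos] with t ht
    refine ae_of_all _ fun s hs => ?_
    rw [norm_mul]
    exact mul_le_mul_of_nonneg_right (hK (t, s) ⟨ht, uIoc_subset_uIcc hs⟩) (norm_nonneg _)
  · exact ((hk.comp (continuous_id.prodMk continuous_const)).mul continuous_const).continuousAt

lemma intervalIntegral_mul_nonneg {k g : ℝ → ℝ} {a b : ℝ} (hab : a ≤ b)
    (hk : ∀ s ∈ Ioc a b, 0 ≤ k s) (hg : ∀ s ∈ Ioc a b, 0 ≤ g s) :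
    0 ≤ ∫ s in a..b, k s * g s := by
  rw [integral_of_le hab]
  exact setIntegral_nonneg measurableSet_Ioc fun s hs => mul_nonneg (hk s hs) (hg s hs)

lemma abs_intervalIntegral_mul_le {k g w : ℝ → ℝ} {a b c : ℝ} (hab : a ≤ b)
    (hk : ∀ s ∈ Ioc a b, 0 ≤ k s) (hg : ∀ s ∈ Ioc a b, |g s| ≤ c * w s)
    (hkw : IntervalIntegrable (fun s => k s * w s) volume a b) :
    |∫ s in a..b, k s * g s| ≤ c * ∫ s in a..b, k s * w s := by
  rw [← intervalIntegral.integral_const_mul, ← Real.norm_eq_abs]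
  refine norm_integral_le_of_norm_le hab (ae_of_all _ fun s hs => ?_) (hkw.const_mul c)
  rw [norm_mul, norm_of_nonneg (hk s hs), Real.norm_eq_abs]
  calc k s * |g s| ≤ k s * (c * w s) := mul_le_mul_of_nonneg_left (hg s hs) (hk s hs)
    _ = c * (k s * w s) := by ring

end KernelIntegral

section GreenFunction

variable {α : ℝ}

lemma greenG_eq_max (hα : 1 < α) (t s : ℝ) :
    greenG α t s = (max (t - s) 0) ^ (α - 1) / Gamma α
      + (1 - s) ^ (α - 2) * t ^ (α - 2) * ((s - t) + (α - 2) * (1 - t) * s) / Gamma α := by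
  unfold greenG
  split_ifs with h
  · rw [max_eq_left (sub_nonneg.2 h), add_div]
  · rw [max_eq_right (by linarith), zero_rpow (by linarith), zero_div, zero_add]

lemma greenG_continuous (hα : 2 ≤ α) : Continuous (uncurry (greenG α)) := by
  have hpow {p : ℝ} (hp : 0 ≤ p) {g : ℝ × ℝ → ℝ} (hg : Continuous g) :
      Continuous fun x => g x ^ p := hg.rpow_const fun _ => Or.inr hp
  have : Continuous fun x : ℝ × ℝ => (max (x.1 - x.2) 0) ^ (α - 1) / Gamma α
      + (1 - x.2) ^ (α - 2) * x.1 ^ (α - 2) * ((x.2 - x.1) + (α - 2) * (1 - x.1) * x.2)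
        / Gamma α := by
    have := hpow (p := α - 1) (by linarith)
      (by fun_prop : Continuous fun x : ℝ × ℝ => max (x.1 - x.2) 0)
    have := hpow (p := α - 2) (by linarith)
      (by fun_prop : Continuous fun x : ℝ × ℝ => 1 - x.2)
    have := hpow (p := α - 2) (by linarith) continuous_fst
    fun_prop
  convert this using 2 with x
  exact greenG_eq_max (by linarith) x.1 x.2

-- Bernoulli's inequality `u ^ β ≥ 1 + β (u - 1)` for `u = x / y`.
lemma mul_rpow_sub_rpow_le {x y β : ℝ} (hx : 0 ≤ x) (hxy : x ≤ y) (hβ : 1 ≤ β) :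
    x * (y ^ β - x ^ β) ≤ β * (y - x) * y ^ β := by
  rcases (hx.trans hxy).eq_or_lt with hy | hy
  · obtain rfl : x = 0 := le_antisymm (hxy.trans hy.ge) hx
    simp [← hy]
  set u := x / y
  have hu0 : 0 ≤ u := div_nonneg hx hy.le
  have hu1 : u ≤ 1 := (div_le_one hy).2 hxy
  have hxu : x = y * u := (mul_div_cancel₀ x hy.ne').symm
  have hbern : 1 + β * (u - 1) ≤ u ^ β := by
    simpa using one_add_mul_self_le_rpow_one_add (s := u - 1) (by linarith) hβ
  have hyβ : 0 ≤ y ^ β := rpow_nonneg hy.le β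
  have hxβ : x ^ β = y ^ β * u ^ β := by rw [hxu, mul_rpow hy.le hu0]
  rw [hxβ]
  calc x * (y ^ β - y ^ β * u ^ β) = x * y ^ β * (1 - u ^ β) := by ring
    _ ≤ x * y ^ β * (β * (1 - u)) := by gcongr; linarith
    _ ≤ y * y ^ β * (β * (1 - u)) := by gcongr
    _ = β * (y - x) * y ^ β := by rw [hxu]; ring

lemma greenG_nonneg (hα : 3 ≤ α) {t s : ℝ} (ht₀ : 0 ≤ t) (ht₁ : t ≤ 1) (hs₀ : 0 ≤ s)
    (hs₁ : s ≤ 1) : 0 ≤ greenG α t s := by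
  unfold greenG
  have hΓ : 0 < Gamma α := Gamma_pos_of_pos (by linarith)
  split_ifs with h
  · refine div_nonneg ?_ hΓ.le
    -- with `x = t - s`, `y = t (1 - s)` and `β = α - 2` the numerator is
    -- `β (y - x) y ^ β - x (y ^ β - x ^ β)`
    have hx : 0 ≤ t - s := sub_nonneg.2 h
    have hxy : t - s ≤ t * (1 - s) := by nlinarith
    have key := mul_rpow_sub_rpow_le hx hxy (β := α - 2) (by linarith)
    have hy : (1 - s) ^ (α - 2) * t ^ (α - 2) = (t * (1 - s)) ^ (α - 2) := by
      rw [mul_rpow ht₀ (by linarith), mul_comm]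
    have hxpow : (t - s) ^ (α - 1) = (t - s) * (t - s) ^ (α - 2) := by
      rw [show α - 1 = 1 + (α - 2) by ring, rpow_add' hx (by linarith), rpow_one]
    rw [hy, hxpow]
    nlinarith
  · have hα2 : 0 ≤ α - 2 := by linarith
    have : 0 ≤ (s - t) + (α - 2) * (1 - t) * s :=
      add_nonneg (by linarith) (mul_nonneg (mul_nonneg hα2 (by linarith)) hs₀)
    have := sub_nonneg.2 hs₁
    positivity

end GreenFunction

section HammersteinOperator

lemma uext_continuousOn (u : C(Icc (0 : ℝ) 1, ℝ)) : ContinuousOn (uext u) (Icc 0 1) := by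
  rw [continuousOn_iff_continuous_domRestrict]
  convert u.continuous using 1
  funext s
  simp [uext]

lemma uext_nonneg {u : C(Icc (0 : ℝ) 1, ℝ)} (hu : ∀ t, 0 ≤ u t) (s : ℝ) : 0 ≤ uext u s := by
  unfold uext
  split
  exacts [hu _, le_rfl]

lemma abs_uext_sub_uext_le (u v : C(Icc (0 : ℝ) 1, ℝ)) (s : ℝ) :
    |uext u s - uext v s| ≤ dist u v := by
  unfold uext
  split
  · exact (Real.dist_eq _ _).symm.trans_le (ContinuousMap.dist_apply_le_dist _)
  · simp

variable {σ : ℝ} {f : ℝ → ℝ → ℝ}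

lemma intervalIntegrable_comp_uext (hσ : σ < 1)
    (hfcont : ContinuousOn (fun p : ℝ × ℝ => f p.1 p.2) (Ioc 0 1 ×ˢ Ici 0))
    (hfext : ContinuousOn (fun p : ℝ × ℝ => p.1 ^ σ * f p.1 p.2) (Icc 0 1 ×ˢ Ici 0))
    {u : C(Icc (0 : ℝ) 1, ℝ)} (hu : ∀ t, 0 ≤ u t) :
    IntervalIntegrable (fun s => f s (uext u s)) volume 0 1 := by
  have hgraph : ContinuousOn (fun s => (s, uext u s)) (Icc 0 1) :=
    continuousOn_id.prodMk (uext_continuousOn u)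
  have hmaps (S : Set ℝ) : MapsTo (fun s => (s, uext u s)) S (S ×ˢ Ici 0) :=
    fun s hs => ⟨hs, uext_nonneg hu s⟩
  obtain ⟨M, hM⟩ := isCompact_Icc.exists_bound_of_continuousOn
    (hfext.comp hgraph (hmaps _))
  refine intervalIntegrable_of_abs_le_mul_rpow_neg (c := M) hσ
    ((hfcont.comp (hgraph.mono Ioc_subset_Icc_self) (hmaps _)).aestronglyMeasurable
      measurableSet_Ioc) fun s hs => ?_
  have hsσ : 0 < s ^ σ := rpow_pos_of_pos hs.1 σ
  have hMs := hM s (Ioc_subset_Icc_self hs)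
  rw [comp_apply, Real.norm_eq_abs, abs_mul, abs_of_pos hsσ] at hMs
  rw [rpow_neg hs.1.le, le_mul_inv_iff₀ hsσ]
  linarith

lemma abs_integral_greenG_sub_le {α lam τ N : ℝ} (hα : 3 ≤ α) (hσ : σ < 1) (hτ : 0 ≤ τ)
    (hfcont : ContinuousOn (fun p : ℝ × ℝ => f p.1 p.2) (Ioc 0 1 ×ˢ Ici 0))
    (hfext : ContinuousOn (fun p : ℝ × ℝ => p.1 ^ σ * f p.1 p.2) (Icc 0 1 ×ˢ Ici 0))
    (hcontr : ∀ t ∈ Icc (0 : ℝ) 1, ∀ x : ℝ, 0 ≤ x → ∀ y : ℝ, 0 ≤ y →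
      t ^ σ * |f t x - f t y| ≤ lam * |x - y| / (1 + τ * √|x - y|) ^ 2)
    (hlam : 0 ≤ lam) (hlamN : lam * N ≤ 1)
    (hN : ∀ t ∈ Icc (0 : ℝ) 1, ∫ s in (0 : ℝ)..1, greenG α t s * s ^ (-σ) ≤ N)
    {u v : C(Icc (0 : ℝ) 1, ℝ)} (hu : ∀ t, 0 ≤ u t) (hv : ∀ t, 0 ≤ v t)
    {t : ℝ} (ht : t ∈ Icc (0 : ℝ) 1) :
    |(∫ s in (0 : ℝ)..1, greenG α t s * f s (uext u s)) -
        ∫ s in (0 : ℝ)..1, greenG α t s * f s (uext v s)|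
      ≤ dist u v / (1 + τ * √(dist u v)) ^ 2 := by
  set ψD := dist u v / (1 + τ * √(dist u v)) ^ 2
  have hψD : 0 ≤ ψD := by positivity
  have hG : ContinuousOn (greenG α t) (uIcc 0 1) :=
    ((greenG_continuous (by linarith)).comp (continuous_const.prodMk continuous_id)).continuousOn
  have hdiff : ∀ s ∈ Ioc (0 : ℝ) 1,
      |f s (uext u s) - f s (uext v s)| ≤ lam * ψD * s ^ (-σ) := by
    intro s hs
    have hsσ : 0 < s ^ σ := rpow_pos_of_pos hs.1 σ
    have hgauge := monotoneOn_div_one_add_mul_sqrt_sq hτ (mem_Ici.2 (abs_nonneg _))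
      (mem_Ici.2 dist_nonneg) (abs_uext_sub_uext_le u v s)
    have := hcontr s (Ioc_subset_Icc_self hs) _ (uext_nonneg hu s) _ (uext_nonneg hv s)
    rw [mul_div_assoc] at this
    rw [rpow_neg hs.1.le, le_mul_inv_iff₀ hsσ, mul_comm]
    exact this.trans (mul_le_mul_of_nonneg_left hgauge hlam)
  rw [← integral_sub ((intervalIntegrable_comp_uext hσ hfcont hfext hu).continuousOn_mul hG)
    ((intervalIntegrable_comp_uext hσ hfcont hfext hv).continuousOn_mul hG)]
  simp only [← mul_sub]
  calc _ ≤ lam * ψD * ∫ s in (0 : ℝ)..1, greenG α t s * s ^ (-σ) :=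
        abs_intervalIntegral_mul_le zero_le_one
          (fun s hs => greenG_nonneg hα ht.1 ht.2 hs.1.le hs.2) hdiff
          ((intervalIntegrable_rpow' (r := -σ) (by linarith)).continuousOn_mul hG)
    _ ≤ lam * ψD * N := mul_le_mul_of_nonneg_left (hN t ht) (by positivity)
    _ ≤ ψD := by nlinarith

end HammersteinOperator

lemma isClosed_setOf_forall_nonneg {X : Type*} [TopologicalSpace X] :
    IsClosed {u : C(X, ℝ) | ∀ t, 0 ≤ u t} := by
  simp only [ofPred_forall]
  exact isClosed_iInter fun t => isClosed_le continuous_const (continuous_eval_const t)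

theorem stmt18_general (σ α : ℝ) (hσ1 : σ < 1) (hα : 3 < α)
    (f : ℝ → ℝ → ℝ)
    (hfnn : ∀ t ∈ Set.Ioc (0:ℝ) 1, ∀ y : ℝ, 0 ≤ y → 0 ≤ f t y)
    (hfcont : ContinuousOn (fun p : ℝ × ℝ => f p.1 p.2) (Set.Ioc 0 1 ×ˢ Set.Ici 0))
    (hfext : ContinuousOn (fun p : ℝ × ℝ => p.1 ^ σ * f p.1 p.2) (Set.Icc 0 1 ×ˢ Set.Ici 0))
    (N : ℝ)
    (hN : IsGreatest ((fun t : ℝ => ∫ s in (0:ℝ)..1, greenG α t s * s ^ (-σ)) '' Set.Icc 0 1) N)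
    (lam τ : ℝ) (hlam0 : 0 < lam) (hlamN : lam ≤ 1 / N) (hτ : 0 < τ)
    (hcontr : ∀ t ∈ Set.Icc (0:ℝ) 1, ∀ x : ℝ, 0 ≤ x → ∀ y : ℝ, 0 ≤ y →
      t ^ σ * |f t x - f t y| ≤ lam * |x - y| / (1 + τ * Real.sqrt |x - y|) ^ 2) :
    (∀ u : C(Set.Icc (0:ℝ) 1, ℝ), (∀ t, 0 ≤ u t) →
      ContinuousOn (fun t : ℝ => ∫ s in (0:ℝ)..1, greenG α t s * f s (uext u s)) (Set.Icc 0 1) ∧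
      ∀ t ∈ Set.Icc (0:ℝ) 1, 0 ≤ ∫ s in (0:ℝ)..1, greenG α t s * f s (uext u s)) ∧
    (∃! u : C(Set.Icc (0:ℝ) 1, ℝ), (∀ t, 0 ≤ u t) ∧
      ∀ t : Set.Icc (0:ℝ) 1, u t = ∫ s in (0:ℝ)..1, greenG α (t : ℝ) s * f s (uext u s)) := by
  have hmaps (u : C(Icc (0 : ℝ) 1, ℝ)) (hu : ∀ t, 0 ≤ u t) :
      ContinuousOn (fun t => ∫ s in (0 : ℝ)..1, greenG α t s * f s (uext u s)) (Icc 0 1) ∧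
      ∀ t ∈ Icc (0 : ℝ) 1, 0 ≤ ∫ s in (0 : ℝ)..1, greenG α t s * f s (uext u s) :=
    ⟨(continuous_intervalIntegral_mul (greenG_continuous (by linarith))
        (intervalIntegrable_comp_uext hσ1 hfcont hfext hu)).continuousOn,
      fun t ht => intervalIntegral_mul_nonneg zero_le_one
        (fun s hs => greenG_nonneg hα.le ht.1 ht.2 hs.1.le hs.2)
        fun s hs => hfnn s hs _ (uext_nonneg hu s)⟩
  refine ⟨hmaps, ?_⟩
  have hlamN' : lam * N ≤ 1 := by
    rwa [le_div_iff₀ (one_div_pos.1 (hlam0.trans_le hlamN))] at hlamN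
  let P := {u : C(Icc (0 : ℝ) 1, ℝ) // ∀ t, 0 ≤ u t}
  have : Nonempty P := ⟨⟨0, fun _ => le_rfl⟩⟩
  have : CompleteSpace P := isClosed_setOf_forall_nonneg.completeSpace_coe
  let T : P → P := fun u =>
    ⟨⟨_, (hmaps u.1 u.2).1.domRestrict⟩, fun t => (hmaps u.1 u.2).2 t t.2⟩
  have hT (u v : P) : dist (T u) (T v) ≤ dist u v / (1 + τ * √(dist u v)) ^ 2 :=
    (ContinuousMap.dist_le (by positivity)).2 fun t =>
      abs_integral_greenG_sub_le hα.le hσ1 hτ.le hfcont hfext hcontr hlam0.le hlamN'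
        (fun t ht => hN.2 ⟨t, ht, rfl⟩) u.2 v.2 t.2
  obtain ⟨u, hu, huniq⟩ := exists_unique_isFixedPt_of_dist_le hτ hT
  refine ⟨u.1, ⟨u.2, fun t => congr($(congrArg Subtype.val hu.symm) t)⟩, fun v ⟨hv, hvT⟩ => ?_⟩
  exact congrArg Subtype.val
    (huniq ⟨v, hv⟩ (Subtype.ext (ContinuousMap.ext fun t => (hvT t).symm)))

theorem stmt18 (σ α : ℝ) (hσ0 : 0 < σ) (hσ1 : σ < 1) (hα : 3 < α) (hα4 : α ≤ 4)
    (f : ℝ → ℝ → ℝ)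
    (hfnn : ∀ t ∈ Set.Ioc (0:ℝ) 1, ∀ y : ℝ, 0 ≤ y → 0 ≤ f t y)
    (hfcont : ContinuousOn (fun p : ℝ × ℝ => f p.1 p.2) (Set.Ioc 0 1 ×ˢ Set.Ici 0))
    (hfext : ContinuousOn (fun p : ℝ × ℝ => p.1 ^ σ * f p.1 p.2) (Set.Icc 0 1 ×ˢ Set.Ici 0))
    (N : ℝ)
    (hN : IsGreatest ((fun t : ℝ => ∫ s in (0:ℝ)..1, greenG α t s * s ^ (-σ)) '' Set.Icc 0 1) N)
    (lam τ : ℝ) (hlam0 : 0 < lam) (hlamN : lam ≤ 1 / N) (hτ : 0 < τ)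
    (hcontr : ∀ t ∈ Set.Icc (0:ℝ) 1, ∀ x : ℝ, 0 ≤ x → ∀ y : ℝ, 0 ≤ y →
      t ^ σ * |f t x - f t y| ≤ lam * |x - y| / (1 + τ * Real.sqrt |x - y|) ^ 2) :
    (∀ u : C(Set.Icc (0:ℝ) 1, ℝ), (∀ t, 0 ≤ u t) →
      ContinuousOn (fun t : ℝ => ∫ s in (0:ℝ)..1, greenG α t s * f s (uext u s)) (Set.Icc 0 1) ∧
      ∀ t ∈ Set.Icc (0:ℝ) 1, 0 ≤ ∫ s in (0:ℝ)..1, greenG α t s * f s (uext u s)) ∧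
    (∃! u : C(Set.Icc (0:ℝ) 1, ℝ), (∀ t, 0 ≤ u t) ∧
      ∀ t : Set.Icc (0:ℝ) 1, u t = ∫ s in (0:ℝ)..1, greenG α (t : ℝ) s * f s (uext u s)) :=
  stmt18_general σ α hσ1 hα f hfnn hfcont hfext N hN lam τ hlam0 hlamN hτ hcontr
end

section
/- Under the hypotheses of the existence theorem (0 < σ < 1, 3 < α ≤ 4, f : (0,1]×[0,∞) → [0,∞) continuous with t^σ f(t,y) continuous on [0,1]×[0,∞) and satisfying the Lipschitz-type contraction condition with λ ≤ 1/N), assume additionally that lim_{t→0⁺} f(t,0) = ∞ and that y ↦ t^σ f(t,y) is nondecreasing for each t. Then the unique nonnegative solution u of u(t) = ∫₀¹ G(t,s) f(s,u(s)) ds satisfies u(t) > 0 for all t ∈ (0,1). -/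
open Real Filter

/-!
`u t` is the integral of `s ↦ G(t,s) f(s, u s)` over `(0,1]`. This integrand is nonnegative, it is
integrable because `s ^ σ f(s, u s)` is bounded and `σ < 1`, and it is strictly positive for small
`s > 0`: there `G(t,s) > 0`, and `f(s, u s) ≥ f(s, 0) → ∞` by monotonicity. Positivity of `G` on
`s ≤ t` comes from the tangent-line inequality for the convex function `x ↦ x ^ (α - 2)`.
-/

open Set MeasureTheory Topology

lemma rpow_sub_rpow_le_mul_rpow_mul_sub {β a b : ℝ} (hβ : 1 ≤ β) (hb : 0 ≤ b) (hba : b ≤ a) :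
    a ^ β - b ^ β ≤ β * a ^ (β - 1) * (a - b) := by
  rcases hba.eq_or_lt with rfl | hba
  · simp
  have hslope := (convexOn_rpow hβ).slope_le_of_hasDerivAt hb (hb.trans hba.le) hba
    (hasDerivAt_rpow_const (Or.inr hβ))
  rwa [slope_def_field, div_le_iff₀ (sub_pos.2 hba)] at hslope

lemma rpow_add_one_add_add_rpow_mul_sub_pos {β b c : ℝ} (hβ : 1 ≤ β) (hb : 0 ≤ b) (hc : 0 < c) :
    0 < b ^ (β + 1) + (b + c) ^ β * (β * c - b) := by
  have ha : 0 < b + c := by linarith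
  have htangent := rpow_sub_rpow_le_mul_rpow_mul_sub hβ hb (le_add_of_nonneg_right hc.le)
  rw [add_sub_cancel_left] at htangent
  have hpow : (b + c) ^ β = (b + c) ^ (β - 1) * (b + c) := by
    rw [← rpow_add_one ha.ne', sub_add_cancel]
  have hderiv_pos : 0 < β * (b + c) ^ (β - 1) * c := by
    have := rpow_pos_of_pos ha (β - 1); positivity
  calc 0 < c * (β * (b + c) ^ (β - 1) * c) := mul_pos hc hderiv_pos
    _ ≤ b ^ (β + 1) + (b + c) ^ β * (β * c - b) := by
      rw [rpow_add_one' hb (by linarith), hpow]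
      nlinarith [mul_le_mul_of_nonneg_left htangent hb]

lemma greenG_pos {α t s : ℝ} (hα : 3 ≤ α) (ht : t ∈ Ioo (0 : ℝ) 1) (hs : s ∈ Ioo (0 : ℝ) 1) :
    0 < greenG α t s := by
  obtain ⟨ht0, ht1⟩ := ht
  obtain ⟨hs0, hs1⟩ := hs
  have hΓ : 0 < Gamma α := Gamma_pos_of_pos (by linarith)
  unfold greenG
  split_ifs with hst
  · -- with `b = t - s`, `c = s (1 - t)` and `β = α - 2` the numerator is
    -- `b ^ (β + 1) + (b + c) ^ β * (β * c - b)`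
    have key := rpow_add_one_add_add_rpow_mul_sub_pos (β := α - 2) (by linarith)
      (sub_nonneg.2 hst) (mul_pos hs0 (sub_pos.2 ht1))
    have hbc : t - s + s * (1 - t) = (1 - s) * t := by ring
    rw [hbc, mul_rpow (by linarith) ht0.le, show α - 2 + 1 = α - 1 by ring] at key
    refine div_pos ?_ hΓ
    rwa [show s - t + (α - 2) * (1 - t) * s = (α - 2) * (s * (1 - t)) - (t - s) by ring]
  · have hW : 0 < (s - t) + (α - 2) * (1 - t) * s := by
      have : 0 < (α - 2) * (1 - t) * s := by
        apply mul_pos (mul_pos _ _) hs0 <;> linarith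
      linarith
    have := rpow_pos_of_pos (sub_pos.2 hs1) (α - 2)
    have := rpow_pos_of_pos ht0 (α - 2)
    positivity

lemma greenG_nonneg_s19 {α t s : ℝ} (hα : 3 ≤ α) (ht : t ∈ Ioo (0 : ℝ) 1) (hs : s ∈ Ioc (0 : ℝ) 1) :
    0 ≤ greenG α t s := by
  rcases hs.2.lt_or_eq with hs1 | rfl
  · exact (greenG_pos hα ht ⟨hs.1, hs1⟩).le
  · simp [greenG, ht.2.not_ge, zero_rpow (by linarith : α - 2 ≠ 0)]

lemma abs_greenG_le {α t s : ℝ} (hα : 2 ≤ α) (ht : t ∈ Icc (0 : ℝ) 1) (hs : s ∈ Icc (0 : ℝ) 1) :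
    |greenG α t s| ≤ α / Gamma α := by
  obtain ⟨ht0, ht1⟩ := ht
  obtain ⟨hs0, hs1⟩ := hs
  have hΓ : 0 < Gamma α := Gamma_pos_of_pos (by linarith)
  have hP0 : 0 ≤ (1 - s) ^ (α - 2) * t ^ (α - 2) :=
    mul_nonneg (rpow_nonneg (by linarith) _) (rpow_nonneg ht0 _)
  have hP1 : (1 - s) ^ (α - 2) * t ^ (α - 2) ≤ 1 :=
    mul_le_one₀ (rpow_le_one (by linarith) (by linarith) (by linarith)) (rpow_nonneg ht0 _)
      (rpow_le_one ht0 ht1 (by linarith))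
  have hW : |(s - t) + (α - 2) * (1 - t) * s| ≤ α - 1 := by
    have h0 : 0 ≤ (α - 2) * ((1 - t) * s) := mul_nonneg (by linarith) (by nlinarith)
    have h1 : (α - 2) * ((1 - t) * s) ≤ α - 2 :=
      mul_le_of_le_one_right (by linarith) (mul_le_one₀ (by linarith) hs0 hs1)
    rw [abs_le]; constructor <;> nlinarith
  have hPW : |(1 - s) ^ (α - 2) * t ^ (α - 2) * ((s - t) + (α - 2) * (1 - t) * s)| ≤ α - 1 := by
    rw [abs_mul, abs_of_nonneg hP0]
    nlinarith [abs_nonneg ((s - t) + (α - 2) * (1 - t) * s)]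
  unfold greenG
  split_ifs with hst <;> rw [abs_div, abs_of_pos hΓ, div_le_div_iff_of_pos_right hΓ]
  · have hX : |(t - s) ^ (α - 1)| ≤ 1 := by
      rw [abs_of_nonneg (rpow_nonneg (by linarith) _)]
      exact rpow_le_one (by linarith) (by linarith) (by linarith)
    linarith [abs_add_le ((t - s) ^ (α - 1))
      ((1 - s) ^ (α - 2) * t ^ (α - 2) * ((s - t) + (α - 2) * (1 - t) * s))]
  · linarith

lemma measurable_greenG (α t : ℝ) : Measurable (greenG α t) := by
  unfold greenG
  exact Measurable.ite (measurableSet_le measurable_id measurable_const) (by fun_prop) (by fun_prop)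

lemma integrableOn_Ioc_of_continuousOn_rpow_mul {σ : ℝ} (hσ : σ < 1) {h : ℝ → ℝ}
    (hcont : ContinuousOn (fun s => s ^ σ * h s) (Icc 0 1)) : IntegrableOn h (Ioc 0 1) := by
  obtain ⟨C, hC⟩ := isCompact_Icc.exists_bound_of_continuousOn hcont
  have hrpow : IntegrableOn (fun s : ℝ => s ^ (-σ)) (Ioc 0 1) :=
    (intervalIntegrable_iff_integrableOn_Ioc_of_le zero_le_one).1
      (intervalIntegral.intervalIntegrable_rpow' (by linarith))
  have hprod : IntegrableOn (fun s => s ^ (-σ) * (s ^ σ * h s)) (Ioc 0 1) :=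
    hrpow.mul_bdd ((hcont.mono Ioc_subset_Icc_self).aestronglyMeasurable measurableSet_Ioc)
      (ae_restrict_of_forall_mem measurableSet_Ioc fun s hs => hC s (Ioc_subset_Icc_self hs))
  refine hprod.congr_fun (fun s hs => ?_) measurableSet_Ioc
  dsimp only
  rw [← mul_assoc, ← rpow_add hs.1, neg_add_cancel, rpow_zero, one_mul]

lemma integrableOn_greenG_mul {α t : ℝ} (hα : 2 ≤ α) (ht : t ∈ Icc (0 : ℝ) 1) {h : ℝ → ℝ}
    (hh : IntegrableOn h (Ioc 0 1)) : IntegrableOn (fun s => greenG α t s * h s) (Ioc 0 1) :=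
  Integrable.bdd_mul hh (measurable_greenG α t).aestronglyMeasurable
    (ae_restrict_of_forall_mem measurableSet_Ioc fun _ hs =>
      abs_greenG_le hα ht (Ioc_subset_Icc_self hs))

lemma setIntegral_Ioc_pos_of_eventually_pos {g : ℝ → ℝ} {a b : ℝ} (hab : a < b)
    (hg : IntegrableOn g (Ioc a b)) (hnn : ∀ s ∈ Ioc a b, 0 ≤ g s)
    (hpos : ∀ᶠ s in 𝓝[>] a, 0 < g s) : 0 < ∫ s in Ioc a b, g s := by
  rw [setIntegral_pos_iff_support_of_nonneg_ae (ae_restrict_of_forall_mem measurableSet_Ioc hnn) hg]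
  have hmem : Function.support g ∩ Ioc a b ∈ 𝓝[>] a :=
    (hpos.and (Ioc_mem_nhdsGT hab)).mono fun _ hs => ⟨hs.1.ne', hs.2⟩
  obtain ⟨c, hac, hsub⟩ := mem_nhdsGT_iff_exists_Ioo_subset.1 hmem
  calc (0 : ENNReal) < volume (Ioo a c) := by simpa using hac
    _ ≤ volume (Function.support g ∩ Ioc a b) := measure_mono hsub

theorem stmt19_general (σ α : ℝ) (hσ1 : σ < 1) (hα : 3 < α)
    (f : ℝ → ℝ → ℝ)
    (hfnn : ∀ t ∈ Set.Ioc (0:ℝ) 1, ∀ y : ℝ, 0 ≤ y → 0 ≤ f t y)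
    (hfext : ContinuousOn (fun p : ℝ × ℝ => p.1 ^ σ * f p.1 p.2) (Set.Icc 0 1 ×ˢ Set.Ici 0))
    (hsing : Tendsto (fun t : ℝ => f t 0) (nhdsWithin 0 (Set.Ioi 0)) atTop)
    (hmono : ∀ t ∈ Set.Icc (0:ℝ) 1, MonotoneOn (fun y : ℝ => t ^ σ * f t y) (Set.Ici 0))
    (u : ℝ → ℝ) (hu : ContinuousOn u (Set.Icc 0 1))
    (hunn : ∀ t ∈ Set.Icc (0:ℝ) 1, 0 ≤ u t)
    (heq : ∀ t ∈ Set.Icc (0:ℝ) 1, u t = ∫ s in (0:ℝ)..1, greenG α t s * f s (u s)) :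
    ∀ t ∈ Set.Ioo (0:ℝ) 1, 0 < u t := by
  intro t ht
  have hfu_cont : ContinuousOn (fun s => s ^ σ * f s (u s)) (Icc 0 1) :=
    hfext.comp (continuousOn_id.prodMk hu) fun s hs => ⟨hs, hunn s hs⟩
  have hfu_pos : ∀ᶠ s in 𝓝[>] 0, 0 < f s (u s) := by
    filter_upwards [hsing.eventually_gt_atTop 0, Ioo_mem_nhdsGT one_pos] with s hs0 hs
    have hs' : s ∈ Icc (0 : ℝ) 1 := Ioo_subset_Icc_self hs
    exact hs0.trans_le <| le_of_mul_le_mul_left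
      (hmono s hs' self_mem_Ici (hunn s hs') (hunn s hs')) (rpow_pos_of_pos hs.1 σ)
  rw [heq t (Ioo_subset_Icc_self ht), intervalIntegral.integral_of_le zero_le_one]
  refine setIntegral_Ioc_pos_of_eventually_pos one_pos
    (integrableOn_greenG_mul (by linarith) (Ioo_subset_Icc_self ht)
      (integrableOn_Ioc_of_continuousOn_rpow_mul hσ1 hfu_cont))
    (fun s hs => mul_nonneg (greenG_nonneg_s19 hα.le ht hs) (hfnn s hs _ (hunn s (Ioc_subset_Icc_self hs))))
    ?_
  filter_upwards [hfu_pos, Ioo_mem_nhdsGT ht.1] with s hfs hs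
  exact mul_pos (greenG_pos hα.le ht ⟨hs.1, hs.2.trans ht.2⟩) hfs

theorem stmt19 (σ α : ℝ) (hσ0 : 0 < σ) (hσ1 : σ < 1) (hα : 3 < α) (hα4 : α ≤ 4)
    (f : ℝ → ℝ → ℝ)
    (hfnn : ∀ t ∈ Set.Ioc (0:ℝ) 1, ∀ y : ℝ, 0 ≤ y → 0 ≤ f t y)
    (hfcont : ContinuousOn (fun p : ℝ × ℝ => f p.1 p.2) (Set.Ioc 0 1 ×ˢ Set.Ici 0))
    (hfext : ContinuousOn (fun p : ℝ × ℝ => p.1 ^ σ * f p.1 p.2) (Set.Icc 0 1 ×ˢ Set.Ici 0))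
    (N : ℝ)
    (hN : IsGreatest ((fun t : ℝ => ∫ s in (0:ℝ)..1, greenG α t s * s ^ (-σ)) '' Set.Icc 0 1) N)
    (lam τ : ℝ) (hlam0 : 0 < lam) (hlamN : lam ≤ 1 / N) (hτ : 0 < τ)
    (hcontr : ∀ t ∈ Set.Icc (0:ℝ) 1, ∀ x : ℝ, 0 ≤ x → ∀ y : ℝ, 0 ≤ y →
      t ^ σ * |f t x - f t y| ≤ lam * |x - y| / (1 + τ * Real.sqrt |x - y|) ^ 2)
    (hsing : Tendsto (fun t : ℝ => f t 0) (nhdsWithin 0 (Set.Ioi 0)) atTop)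
    (hmono : ∀ t ∈ Set.Icc (0:ℝ) 1, MonotoneOn (fun y : ℝ => t ^ σ * f t y) (Set.Ici 0))
    (u : ℝ → ℝ) (hu : ContinuousOn u (Set.Icc 0 1))
    (hunn : ∀ t ∈ Set.Icc (0:ℝ) 1, 0 ≤ u t)
    (heq : ∀ t ∈ Set.Icc (0:ℝ) 1, u t = ∫ s in (0:ℝ)..1, greenG α t s * f s (u s)) :
    ∀ t ∈ Set.Ioo (0:ℝ) 1, 0 < u t :=
  stmt19_general σ α hσ1 hα f hfnn hfext hsing hmono u hu hunn heq
end
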